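/- For the abstract wave equation ü + Au + A^θ u̇ = 0 with A unbounded strictly positive selfadjoint, the generator 𝒜_θ(u,v) = (v, −Au − A^θ v) is bijective if and only if θ ≤ 1, and σ(𝒜_θ) ∩ iℝ = ∅ if and only if θ ≤ 1. Consequently the associated contraction semigroup is semiuniformly stable if and only if θ ≤ 1. -/

import Mathlib

open MeasureTheory Filter Complex

noncomputable section

variable {Ω : Type*} [MeasurableSpace Ω]

/-- `∫ a |u|²`: the squared `H¹ = D(A^{1/2})`-seminorm in the
multiplication-operator model of the spectral theorem, where `A` acts as
multiplication by `a`. -/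
def aInt (μ : Measure Ω) (a : Ω → ℝ) (u : Ω → ℂ) : ENNReal :=
  ∫⁻ ω, ENNReal.ofReal (a ω * ‖u ω‖ ^ 2) ∂μ

/-- Membership in `H¹ = D(A^{1/2})`. -/
def memH1 (μ : Measure Ω) (a : Ω → ℝ) (u : Ω → ℂ) : Prop :=
  MemLp u 2 μ ∧ aInt μ a u < ⊤

/-- Membership in the domain of the generator `𝒜(u,v) = (v, -Au - f(A)v)`:
`u, v ∈ H¹` and `Au + f(A)v ∈ H`. -/
def memDom (μ : Measure Ω) (a : Ω → ℝ) (f : ℝ → ℝ) (u v : Ω → ℂ) : Prop :=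
  memH1 μ a u ∧ memH1 μ a v ∧
    MemLp (fun ω => (a ω : ℂ) * u ω + (f (a ω) : ℂ) * v ω) 2 μ

/-- Squared norm in the phase space `ℋ = H¹ × H`. -/
def hsq (μ : Measure Ω) (a : Ω → ℝ) (u v : Ω → ℂ) : ENNReal :=
  aInt μ a u + ∫⁻ ω, ENNReal.ofReal (‖v ω‖ ^ 2) ∂μ

/-- `ξ` belongs to the resolvent set of `𝒜`: the equation `ξ z - 𝒜 z = ẑ` has,
for every `ẑ ∈ ℋ`, a unique solution `z ∈ D(𝒜)`, depending boundedly on `ẑ`. -/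
def resSet (μ : Measure Ω) (a : Ω → ℝ) (f : ℝ → ℝ) (ξ : ℂ) : Prop :=
  ∃ C : ℝ, ∀ uh vh : Ω → ℂ, memH1 μ a uh → MemLp vh 2 μ →
    ∃ u v : Ω → ℂ, memDom μ a f u v ∧
      (fun ω => ξ * u ω - v ω) =ᵐ[μ] uh ∧
      (fun ω => ξ * v ω + ((a ω : ℂ) * u ω + (f (a ω) : ℂ) * v ω)) =ᵐ[μ] vh ∧
      hsq μ a u v ≤ ENNReal.ofReal C * hsq μ a uh vh ∧
      ∀ u' v' : Ω → ℂ, memDom μ a f u' v' →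
        (fun ω => ξ * u' ω - v' ω) =ᵐ[μ] uh →
        (fun ω => ξ * v' ω + ((a ω : ℂ) * u' ω + (f (a ω) : ℂ) * v' ω)) =ᵐ[μ] vh →
        u' =ᵐ[μ] u ∧ v' =ᵐ[μ] v

/-- The set `Λ` of positive limits of `f(sₙ)/sₙ` along sequences `sₙ → ∞` in `σ`. -/
def limSet (σS : Set ℝ) (f : ℝ → ℝ) : Set ℝ :=
  {ℓ : ℝ | 0 < ℓ ∧ ∃ s : ℕ → ℝ, (∀ n, s n ∈ σS) ∧ Tendsto s atTop atTop ∧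
    Tendsto (fun n => f (s n) / s n) atTop (nhds ℓ)}

/-!
In the multiplication-operator model everything is pointwise in the spectral variable `s = a ω`.
For `ξ = iτ` the resolvent equation `ξ z - 𝒜 z = ẑ` reads `v = ξ u - û` and
`(ξ² + s + ξ s^θ) u = v̂ + (ξ + s^θ) û`, so the solution is bounded in `H¹ × H` as soon as
`s + |ξ + s^θ|² ≲ |ξ² + s + ξ s^θ|² = (s - τ²)² + τ² s^{2θ}` on `[s₀, ∞)`. For `θ ≤ 1` this holds:
on bounded intervals by compactness, and for large `s` because `s^{2θ} ≤ s²`.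
Conversely, for `ξ = 0` the solution is `u = (s^θ / s) û`, so a bounded inverse forces
`(s^{θ-1})²` to be essentially bounded on the spectrum. For `θ > 1` this fails, because the
spectrum is unbounded and `a` charges every neighbourhood of each of its points.
-/

lemma resolvent_eqs_iff {ξ s F u v uh vh : ℂ} (hD : ξ ^ 2 + s + ξ * F ≠ 0) :
    (ξ * u - v = uh ∧ ξ * v + (s * u + F * v) = vh) ↔
      (u = (vh + (ξ + F) * uh) / (ξ ^ 2 + s + ξ * F) ∧ v = ξ * u - uh) := by
  rw [eq_div_iff hD]
  constructor
  · rintro ⟨h1, h2⟩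
    exact ⟨by linear_combination h2 + (ξ + F) * h1, by linear_combination -h1⟩
  · rintro ⟨h1, rfl⟩
    exact ⟨by ring, by linear_combination h1⟩

lemma norm_sq_add_mul_le (w c z : ℂ) : ‖w + c * z‖ ^ 2 ≤ 2 * (‖w‖ ^ 2 + ‖c‖ ^ 2 * ‖z‖ ^ 2) := by
  calc ‖w + c * z‖ ^ 2 ≤ (‖w‖ + ‖c‖ * ‖z‖) ^ 2 := by
        gcongr; exact (norm_add_le _ _).trans_eq (by rw [norm_mul])
    _ ≤ _ := by rw [← mul_pow]; exact add_sq_le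

lemma mul_norm_sq_div_le {s K : ℝ} {c D z w : ℂ} (hs : 0 < s)
    (hK : s + ‖c‖ ^ 2 ≤ K * ‖D‖ ^ 2) :
    s * ‖(w + c * z) / D‖ ^ 2 ≤ 2 * K * (s * ‖z‖ ^ 2 + ‖w‖ ^ 2) := by
  have hD : 0 < ‖D‖ ^ 2 := by
    by_contra! h
    rw [le_antisymm h (sq_nonneg _), mul_zero] at hK
    linarith [sq_nonneg ‖c‖]
  have hsD : s ≤ K * ‖D‖ ^ 2 := by linarith [sq_nonneg ‖c‖]
  have hcD : ‖c‖ ^ 2 ≤ K * ‖D‖ ^ 2 := by linarith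
  rw [norm_div, div_pow, mul_div_assoc', div_le_iff₀ hD]
  calc s * ‖w + c * z‖ ^ 2 ≤ s * (2 * (‖w‖ ^ 2 + ‖c‖ ^ 2 * ‖z‖ ^ 2)) :=
        mul_le_mul_of_nonneg_left (norm_sq_add_mul_le w c z) hs.le
    _ = 2 * (s * ‖w‖ ^ 2 + ‖c‖ ^ 2 * (s * ‖z‖ ^ 2)) := by ring
    _ ≤ 2 * (K * ‖D‖ ^ 2 * ‖w‖ ^ 2 + K * ‖D‖ ^ 2 * (s * ‖z‖ ^ 2)) := by
        gcongr
    _ = _ := by ring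

lemma mul_norm_sq_eq_of_ofReal_mul_eq {s x : ℝ} {u z : ℂ} (hs : s ≠ 0) (h : (s : ℂ) * u = x * z) :
    s * ‖u‖ ^ 2 = (x / s) ^ 2 * (s * ‖z‖ ^ 2) := by
  have hu : u = ((x / s : ℝ) : ℂ) * z := by
    rw [Complex.ofReal_div, div_mul_eq_mul_div, eq_div_iff (Complex.ofReal_ne_zero.2 hs), ← h]
    ring
  rw [hu, norm_mul, Complex.norm_real, Real.norm_eq_abs, mul_pow, sq_abs]
  ring

lemma norm_add_ofReal_sq_of_re_eq_zero {ξ : ℂ} (hξ : ξ.re = 0) (x : ℝ) :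
    ‖ξ + x‖ ^ 2 = x ^ 2 + ξ.im ^ 2 := by
  rw [Complex.sq_norm, Complex.normSq_apply]
  simp only [Complex.add_re, Complex.add_im, Complex.ofReal_re, Complex.ofReal_im, hξ]
  ring

lemma norm_sq_add_ofReal_add_mul_ofReal_sq_of_re_eq_zero {ξ : ℂ} (hξ : ξ.re = 0) (s x : ℝ) :
    ‖ξ ^ 2 + s + ξ * x‖ ^ 2 = (s - ξ.im ^ 2) ^ 2 + (ξ.im * x) ^ 2 := by
  rw [Complex.sq_norm, Complex.normSq_apply]
  simp only [sq, Complex.add_re, Complex.add_im, Complex.mul_re, Complex.mul_im,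
    Complex.ofReal_re, Complex.ofReal_im, hξ]
  ring

lemma exists_forall_le_mul_of_continuousOn_Icc {N D : ℝ → ℝ} {s₀ R K : ℝ}
    (hN : ContinuousOn N (Set.Icc s₀ R)) (hD : ContinuousOn D (Set.Icc s₀ R))
    (hpos : ∀ s, s₀ ≤ s → 0 < D s) (hlarge : ∀ s, R ≤ s → N s ≤ K * D s) :
    ∃ K', ∀ s, s₀ ≤ s → N s ≤ K' * D s := by
  obtain ⟨B, hB⟩ := isCompact_Icc.bddAbove_image
    (hN.div hD fun s hs => (hpos s hs.1).ne')
  refine ⟨max K B, fun s hs => ?_⟩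
  rcases le_total R s with hRs | hsR
  · exact (hlarge s hRs).trans (by gcongr; exacts [(hpos s hs).le, le_max_left _ _])
  · have := hB ⟨s, ⟨hs, hsR⟩, rfl⟩
    rw [Pi.div_apply, div_le_iff₀ (hpos s hs)] at this
    exact this.trans (by gcongr; exacts [(hpos s hs).le, le_max_right _ _])

lemma exists_add_rpow_sq_le_mul {s₀ θ : ℝ} (hs₀ : 0 < s₀) (hθ : θ ≤ 1) (τ : ℝ) :
    ∃ K, ∀ s, s₀ ≤ s →
      s + ((s ^ θ) ^ 2 + τ ^ 2) ≤ K * ((s - τ ^ 2) ^ 2 + (τ * s ^ θ) ^ 2) := by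
  have hcont : ContinuousOn (fun s : ℝ => s ^ θ) (Set.Icc s₀ (2 * τ ^ 2 + 1)) :=
    continuousOn_id.rpow_const fun s hs => Or.inl (hs₀.trans_le hs.1).ne'
  refine exists_forall_le_mul_of_continuousOn_Icc (R := 2 * τ ^ 2 + 1) (K := 12)
    (by fun_prop) (by fun_prop) (fun s hs => ?_) (fun s hs => ?_)
  · have hs0 : 0 < s := hs₀.trans_le hs
    rcases eq_or_ne τ 0 with rfl | hτ
    · simpa using pow_pos hs0 2
    · positivity
  · -- For `s ≥ 2τ² + 1`: `s ≤ s²`, `s^{2θ} ≤ s²`, `τ² ≤ s²` and `s² ≤ 4 (s - τ²)²`.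
    have hs1 : 1 ≤ s := by nlinarith [sq_nonneg τ]
    have hθs : (s ^ θ) ^ 2 ≤ s ^ 2 := by
      gcongr
      simpa using Real.rpow_le_rpow_of_exponent_le hs1 hθ
    nlinarith [sq_nonneg (τ * s ^ θ)]

lemma tendsto_rpow_div_self_sq_atTop {θ : ℝ} (hθ : 1 < θ) :
    Tendsto (fun s : ℝ => (s ^ θ / s) ^ 2) atTop atTop := by
  refine (tendsto_pow_atTop two_ne_zero).comp ((tendsto_rpow_atTop (sub_pos.2 hθ)).congr' ?_)
  filter_upwards [eventually_gt_atTop 0] with s hs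
  exact Real.rpow_sub_one hs.ne' θ

section MultiplicationOperator

variable {μ : Measure Ω} {a : Ω → ℝ}

lemma memLp_two_iff_lintegral_ofReal_sq_lt_top {g : Ω → ℂ} (hg : AEStronglyMeasurable g μ) :
    MemLp g 2 μ ↔ ∫⁻ ω, ENNReal.ofReal (‖g ω‖ ^ 2) ∂μ < ⊤ := by
  have h : ∀ ω, ‖g ω‖ₑ ^ (2 : ENNReal).toReal = ENNReal.ofReal (‖g ω‖ ^ 2) := fun ω => by
    rw [ENNReal.toReal_ofNat, ENNReal.rpow_two, ENNReal.ofReal_pow (norm_nonneg _),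
      ofReal_norm]
  simp only [MemLp, hg, true_and,
    eLpNorm_lt_top_iff_lintegral_rpow_enorm_lt_top two_ne_zero ENNReal.ofNat_ne_top, h]

lemma lintegral_ofReal_le_mul_hsq (ha : Measurable a) {uh vh : Ω → ℂ}
    (huh : AEStronglyMeasurable uh μ) {g : Ω → ℝ} {c : ℝ} (hc : 0 ≤ c)
    (hg : ∀ᵐ ω ∂μ, g ω ≤ c * (a ω * ‖uh ω‖ ^ 2 + ‖vh ω‖ ^ 2)) :
    ∫⁻ ω, ENNReal.ofReal (g ω) ∂μ ≤ ENNReal.ofReal c * hsq μ a uh vh := by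
  have hmeas : AEMeasurable (fun ω => ENNReal.ofReal (a ω * ‖uh ω‖ ^ 2)) μ :=
    (ha.aemeasurable.mul (huh.norm.aemeasurable.pow_const 2)).ennreal_ofReal
  calc ∫⁻ ω, ENNReal.ofReal (g ω) ∂μ
      ≤ ∫⁻ ω, ENNReal.ofReal c *
          (ENNReal.ofReal (a ω * ‖uh ω‖ ^ 2) + ENNReal.ofReal (‖vh ω‖ ^ 2)) ∂μ := by
        refine lintegral_mono_ae (hg.mono fun ω h => ?_)
        calc ENNReal.ofReal (g ω)
            ≤ ENNReal.ofReal c * ENNReal.ofReal (a ω * ‖uh ω‖ ^ 2 + ‖vh ω‖ ^ 2) := by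
              rw [← ENNReal.ofReal_mul hc]; exact ENNReal.ofReal_le_ofReal h
          _ ≤ _ := mul_le_mul_right ENNReal.ofReal_add_le _
    _ = ENNReal.ofReal c * hsq μ a uh vh := by
        rw [lintegral_const_mul' _ _ ENNReal.ofReal_ne_top, lintegral_add_left' hmeas, hsq, aInt]

lemma memH1_of_aInt_lt_top {s₀ : ℝ} (hs₀ : 0 < s₀) (hlb : ∀ᵐ ω ∂μ, s₀ ≤ a ω) {u : Ω → ℂ}
    (hu : AEStronglyMeasurable u μ) (hau : aInt μ a u < ⊤) : memH1 μ a u := by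
  refine ⟨(memLp_two_iff_lintegral_ofReal_sq_lt_top hu).2 ?_, hau⟩
  have hle : ENNReal.ofReal s₀ * ∫⁻ ω, ENNReal.ofReal (‖u ω‖ ^ 2) ∂μ ≤ aInt μ a u := by
    rw [← lintegral_const_mul' _ _ ENNReal.ofReal_ne_top]
    refine lintegral_mono_ae (hlb.mono fun ω h => ?_)
    rw [← ENNReal.ofReal_mul hs₀.le]
    exact ENNReal.ofReal_le_ofReal (mul_le_mul_of_nonneg_right h (sq_nonneg _))
  rcases ENNReal.mul_lt_top_iff.1 (hle.trans_lt hau) with h | h | h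
  · exact h.2
  · exact absurd h (ENNReal.ofReal_pos.2 hs₀).ne'
  · exact h ▸ ENNReal.zero_lt_top

lemma memH1_and_hsq_le_of_ae_le (ha : Measurable a) {s₀ : ℝ} (hs₀ : 0 < s₀)
    (hlb : ∀ᵐ ω ∂μ, s₀ ≤ a ω) {u v uh vh : Ω → ℂ} (hu : AEStronglyMeasurable u μ)
    (hv : AEStronglyMeasurable v μ) (huh : memH1 μ a uh) (hvh : MemLp vh 2 μ) {c₁ c₂ : ℝ}
    (hc₁ : 0 ≤ c₁) (hc₂ : 0 ≤ c₂)
    (hu_bd : ∀ᵐ ω ∂μ, a ω * ‖u ω‖ ^ 2 ≤ c₁ * (a ω * ‖uh ω‖ ^ 2 + ‖vh ω‖ ^ 2))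
    (hv_bd : ∀ᵐ ω ∂μ, a ω * ‖v ω‖ ^ 2 ≤ c₂ * (a ω * ‖uh ω‖ ^ 2 + ‖vh ω‖ ^ 2)) :
    memH1 μ a u ∧ memH1 μ a v ∧
      hsq μ a u v ≤ ENNReal.ofReal (c₁ + c₂ / s₀) * hsq μ a uh vh := by
  have hv_bd' : ∀ᵐ ω ∂μ, ‖v ω‖ ^ 2 ≤ c₂ / s₀ * (a ω * ‖uh ω‖ ^ 2 + ‖vh ω‖ ^ 2) := by
    filter_upwards [hlb, hv_bd] with ω hω hv
    rw [div_mul_eq_mul_div, le_div_iff₀ hs₀]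
    nlinarith [sq_nonneg ‖v ω‖]
  have hfin : ∀ r : ℝ, ENNReal.ofReal r * hsq μ a uh vh < ⊤ := fun r =>
    ENNReal.mul_lt_top ENNReal.ofReal_lt_top (ENNReal.add_lt_top.2
      ⟨huh.2, (memLp_two_iff_lintegral_ofReal_sq_lt_top hvh.1).1 hvh⟩)
  have hau := lintegral_ofReal_le_mul_hsq ha huh.1.1 hc₁ hu_bd
  have hav := lintegral_ofReal_le_mul_hsq ha huh.1.1 hc₂ hv_bd
  have hv2 := lintegral_ofReal_le_mul_hsq ha huh.1.1 (by positivity) hv_bd'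
  refine ⟨memH1_of_aInt_lt_top hs₀ hlb hu (hau.trans_lt (hfin _)),
    memH1_of_aInt_lt_top hs₀ hlb hv (hav.trans_lt (hfin _)), ?_⟩
  calc hsq μ a u v ≤ ENNReal.ofReal c₁ * hsq μ a uh vh +
        ENNReal.ofReal (c₂ / s₀) * hsq μ a uh vh := add_le_add hau hv2
    _ = _ := by rw [← add_mul, ENNReal.ofReal_add hc₁ (by positivity)]

lemma resSet_of_ae_le (ha : Measurable a) {f : ℝ → ℝ} (hf : Measurable f) {s₀ : ℝ}
    (hs₀ : 0 < s₀) (hlb : ∀ᵐ ω ∂μ, s₀ ≤ a ω) {ξ : ℂ} {K : ℝ}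
    (hK : ∀ᵐ ω ∂μ, a ω + ‖ξ + f (a ω)‖ ^ 2 ≤ K * ‖ξ ^ 2 + a ω + ξ * f (a ω)‖ ^ 2) :
    resSet μ a f ξ := by
  obtain ⟨K, hK₀, hK⟩ : ∃ K ≥ 0, ∀ᵐ ω ∂μ,
      a ω + ‖ξ + f (a ω)‖ ^ 2 ≤ K * ‖ξ ^ 2 + a ω + ξ * f (a ω)‖ ^ 2 :=
    ⟨max K 0, le_max_right _ _, hK.mono fun ω h => h.trans (by gcongr; exact le_max_left _ _)⟩
  refine ⟨2 * K + (4 * K * ‖ξ‖ ^ 2 + 2) / s₀, fun uh vh huh hvh => ?_⟩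
  set u : Ω → ℂ := fun ω => (vh ω + (ξ + f (a ω)) * uh ω) / (ξ ^ 2 + a ω + ξ * f (a ω))
  set v : Ω → ℂ := fun ω => ξ * u ω - uh ω
  have hpos : ∀ᵐ ω ∂μ, 0 < a ω := hlb.mono fun ω h => hs₀.trans_le h
  have hsol : ∀ᵐ ω ∂μ, ∀ u' v' : ℂ, (ξ * u' - v' = uh ω ∧
      ξ * v' + ((a ω : ℂ) * u' + (f (a ω) : ℂ) * v') = vh ω) ↔ (u' = u ω ∧ v' = v ω) := by
    filter_upwards [hpos, hK] with ω hω hKω u' v'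
    have hD : ξ ^ 2 + (a ω : ℂ) + ξ * f (a ω) ≠ 0 := fun h0 => by
      rw [h0, norm_zero] at hKω; nlinarith [sq_nonneg ‖ξ + f (a ω)‖]
    rw [resolvent_eqs_iff hD]
    constructor <;> rintro ⟨rfl, rfl⟩ <;> exact ⟨rfl, rfl⟩
  have hu_bd : ∀ᵐ ω ∂μ, a ω * ‖u ω‖ ^ 2 ≤ 2 * K * (a ω * ‖uh ω‖ ^ 2 + ‖vh ω‖ ^ 2) := by
    filter_upwards [hpos, hK] with ω hω hKω using mul_norm_sq_div_le hω (by simpa using hKω)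
  have hv_bd : ∀ᵐ ω ∂μ, a ω * ‖v ω‖ ^ 2 ≤
      (4 * K * ‖ξ‖ ^ 2 + 2) * (a ω * ‖uh ω‖ ^ 2 + ‖vh ω‖ ^ 2) := by
    filter_upwards [hpos, hu_bd] with ω hω hu
    have := mul_le_mul_of_nonneg_left (norm_sq_add_mul_le (-uh ω) ξ (u ω)) hω.le
    rw [norm_neg, ← sub_eq_neg_add] at this
    nlinarith [sq_nonneg ‖ξ‖, sq_nonneg ‖vh ω‖, mul_nonneg hω.le (sq_nonneg ‖uh ω‖)]
  have hfa : Measurable fun ω => (f (a ω) : ℂ) := by fun_prop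
  have hD : Measurable fun ω => ξ ^ 2 + (a ω : ℂ) + ξ * f (a ω) := by fun_prop
  have hu_meas : AEStronglyMeasurable u μ := by
    simp only [u, div_eq_mul_inv]
    exact (hvh.1.add ((aestronglyMeasurable_const.add hfa.aestronglyMeasurable).mul
      huh.1.1)).mul hD.inv.aestronglyMeasurable
  have hv_meas : AEStronglyMeasurable v μ := (hu_meas.const_mul ξ).sub huh.1.1
  obtain ⟨hu_H1, hv_H1, hbound⟩ := memH1_and_hsq_le_of_ae_le ha hs₀ hlb hu_meas hv_meas
    huh hvh (by positivity) (by positivity) hu_bd hv_bd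
  have heq : ∀ᵐ ω ∂μ, ξ * u ω - v ω = uh ω ∧
      ξ * v ω + ((a ω : ℂ) * u ω + (f (a ω) : ℂ) * v ω) = vh ω :=
    hsol.mono fun ω h => (h _ _).2 ⟨rfl, rfl⟩
  refine ⟨u, v, ⟨hu_H1, hv_H1, ?_⟩, heq.mono fun ω h => h.1, heq.mono fun ω h => h.2, hbound,
    fun u' v' _ h1 h2 => ?_⟩
  · refine (hvh.sub (hv_H1.1.const_mul ξ)).ae_eq (heq.mono fun ω h => ?_)
    rw [Pi.sub_apply]
    linear_combination -h.2
  · have h := (hsol.and (h1.and h2)).mono fun ω h => (h.1 _ _).1 h.2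
    exact ⟨h.mono fun ω h => h.1, h.mono fun ω h => h.2⟩

lemma resSet_rpow_of_le_one (ha : Measurable a) {s₀ : ℝ} (hs₀ : 0 < s₀)
    (hlb : ∀ᵐ ω ∂μ, s₀ ≤ a ω) {θ : ℝ} (hθ : θ ≤ 1) {ξ : ℂ} (hξ : ξ.re = 0) :
    resSet μ a (fun s => s ^ θ) ξ := by
  obtain ⟨K, hK⟩ := exists_add_rpow_sq_le_mul hs₀ hθ ξ.im
  refine resSet_of_ae_le ha (measurable_id.pow_const θ) hs₀ hlb (K := K) (hlb.mono fun ω h => ?_)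
  rw [norm_add_ofReal_sq_of_re_eq_zero hξ, norm_sq_add_ofReal_add_mul_ofReal_sq_of_re_eq_zero hξ]
  exact hK _ h

lemma exists_memH1_indicator_aInt_ne_zero [SigmaFinite μ] (ha : Measurable a) {s₀ : ℝ}
    (hs₀ : 0 < s₀) (hlb : ∀ᵐ ω ∂μ, s₀ ≤ a ω) {E : Set Ω} (hE : MeasurableSet E)
    (hE0 : μ E ≠ 0) :
    ∃ F ⊆ E, memH1 μ a (F.indicator 1) ∧ aInt μ a (F.indicator 1) ≠ 0 := by
  obtain ⟨n, hn⟩ : ∃ n : ℕ, μ (E ∩ {ω | a ω < n}) ≠ 0 := by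
    by_contra! h
    refine hE0 (measure_mono_null (fun ω hω => ?_) (measure_iUnion_null h))
    obtain ⟨n, hn⟩ := exists_nat_gt (a ω)
    exact Set.mem_iUnion.2 ⟨n, hω, hn⟩
  obtain ⟨F, hF, hFE, hF0, hFtop⟩ := Measure.exists_subset_measure_lt_top
    (hE.inter (measurableSet_lt ha measurable_const)) (pos_iff_ne_zero.2 hn)
  have haInt : aInt μ a (F.indicator 1) = ∫⁻ ω in F, ENNReal.ofReal (a ω) ∂μ := by
    rw [aInt, ← lintegral_indicator hF]
    congr 1 with ω
    by_cases hω : ω ∈ F <;> simp [hω]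
  refine ⟨F, fun ω hω => (hFE hω).1, memH1_of_aInt_lt_top hs₀ hlb
    ((measurable_const.indicator hF).aestronglyMeasurable) ?_, ?_⟩
  · calc aInt μ a (F.indicator 1) ≤ ∫⁻ _ in F, ENNReal.ofReal n ∂μ := by
          rw [haInt]
          exact setLIntegral_mono measurable_const fun ω hω =>
            ENNReal.ofReal_le_ofReal (hFE hω).2.le
      _ < ⊤ := by rw [setLIntegral_const]; exact ENNReal.mul_lt_top ENNReal.ofReal_lt_top hFtop
  · rw [haInt]
    refine (lt_of_lt_of_le ?_ (lintegral_mono_ae (ae_restrict_of_ae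
      (hlb.mono fun ω h => ENNReal.ofReal_le_ofReal h)))).ne'
    rw [setLIntegral_const]
    exact ENNReal.mul_pos (ENNReal.ofReal_pos.2 hs₀).ne' hF0.ne'

lemma exists_ae_sq_div_le_of_resSet_zero [SigmaFinite μ] (ha : Measurable a) {f : ℝ → ℝ}
    (hf : Measurable f) {s₀ : ℝ} (hs₀ : 0 < s₀) (hlb : ∀ᵐ ω ∂μ, s₀ ≤ a ω)
    (h : resSet μ a f 0) : ∃ C, ∀ᵐ ω ∂μ, (f (a ω) / a ω) ^ 2 ≤ C := by
  obtain ⟨C, hC⟩ := h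
  set C' := max C 0
  refine ⟨C' + 1, ?_⟩
  by_contra hE0
  simp only [ae_iff, not_le] at hE0
  obtain ⟨F, hFE, huh, hpos⟩ := exists_memH1_indicator_aInt_ne_zero ha hs₀ hlb
    (measurableSet_lt measurable_const (((hf.comp ha).div ha).pow_const 2)) hE0
  set uh : Ω → ℂ := F.indicator 1
  obtain ⟨u, v, -, h1, h2, hbound, -⟩ := hC uh 0 huh MemLp.zero
  have hptw : ∀ᵐ ω ∂μ, (C' + 1) * (a ω * ‖uh ω‖ ^ 2) ≤ a ω * ‖u ω‖ ^ 2 := by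
    filter_upwards [hlb, h1, h2] with ω hω h1 h2
    have hau : (a ω : ℂ) * u ω = f (a ω) * uh ω := by
      simp only [zero_mul, zero_sub, zero_add, Pi.zero_apply] at h1 h2
      linear_combination h2 + (f (a ω) : ℂ) * h1
    rw [mul_norm_sq_eq_of_ofReal_mul_eq (hs₀.trans_le hω).ne' hau]
    by_cases hωF : ω ∈ F
    · exact mul_le_mul_of_nonneg_right (hFE hωF).le
        (mul_nonneg (hs₀.trans_le hω).le (sq_nonneg _))
    · simp [uh, hωF]
  have hle : ENNReal.ofReal (C' + 1) * aInt μ a uh ≤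
      ENNReal.ofReal C' * aInt μ a uh :=
    calc ENNReal.ofReal (C' + 1) * aInt μ a uh
        ≤ aInt μ a u := by
          rw [aInt, ← lintegral_const_mul' _ _ ENNReal.ofReal_ne_top]
          refine lintegral_mono_ae (hptw.mono fun ω h => ?_)
          rw [← ENNReal.ofReal_mul (by positivity)]
          exact ENNReal.ofReal_le_ofReal h
      _ ≤ hsq μ a u v := le_self_add
      _ ≤ ENNReal.ofReal C * hsq μ a uh 0 := hbound
      _ ≤ ENNReal.ofReal C' * aInt μ a uh := by
          simp only [hsq, Pi.zero_apply, norm_zero, ne_eq, OfNat.ofNat_ne_zero,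
            not_false_eq_true, zero_pow, ENNReal.ofReal_zero, lintegral_zero, add_zero]
          gcongr
          exact le_max_left _ _
  rw [ENNReal.mul_le_mul_iff_left hpos huh.2.ne,
    ENNReal.ofReal_le_ofReal_iff (le_max_right _ _)] at hle
  linarith

lemma not_ae_le_of_tendsto_atTop {g : ℝ → ℝ} (hg : Tendsto g atTop atTop) {σS : Set ℝ}
    (hunb : ¬ BddAbove σS) (hmin : ∀ s ∈ σS, ∀ ε > 0, μ {ω | |a ω - s| < ε} ≠ 0) (C : ℝ) :
    ¬ ∀ᵐ ω ∂μ, g (a ω) ≤ C := by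
  obtain ⟨R, hR⟩ := eventually_atTop.1 (hg.eventually_gt_atTop C)
  obtain ⟨s, hs, hRs⟩ := not_bddAbove_iff.1 hunb (R + 1)
  refine fun h => hmin s hs 1 one_pos (measure_mono_null (fun ω hω => ?_) (ae_iff.1 h))
  have := abs_lt.1 (show |a ω - s| < 1 from hω)
  exact not_le.2 (hR _ (by linarith))

end MultiplicationOperator

theorem fractional_damping_semiuniform_general
    (μ : Measure Ω) [SigmaFinite μ] (a : Ω → ℝ) (ha : Measurable a)
    (σS : Set ℝ)
    (s₀ : ℝ) (hs₀ : 0 < s₀) (hlb : ∀ s ∈ σS, s₀ ≤ s)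
    (hunb : ¬ BddAbove σS)
    (hmem : ∀ᵐ ω ∂μ, a ω ∈ σS)
    (hmin : ∀ s ∈ σS, ∀ ε > 0, μ {ω | |a ω - s| < ε} ≠ 0)
    (θ : ℝ) :
    (resSet μ a (fun s => s ^ θ) 0 ↔ θ ≤ 1) ∧
      ((∀ ξ : ℂ, ξ.re = 0 → resSet μ a (fun s => s ^ θ) ξ) ↔ θ ≤ 1) := by
  have hlb' : ∀ᵐ ω ∂μ, s₀ ≤ a ω := hmem.mono fun ω h => hlb _ h
  have hres : θ ≤ 1 → ∀ ξ : ℂ, ξ.re = 0 → resSet μ a (fun s => s ^ θ) ξ :=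
    fun hθ _ hξ => resSet_rpow_of_le_one ha hs₀ hlb' hθ hξ
  have hle : resSet μ a (fun s => s ^ θ) 0 → θ ≤ 1 := by
    intro h
    by_contra! hθ
    obtain ⟨C, hC⟩ := exists_ae_sq_div_le_of_resSet_zero ha (measurable_id.pow_const θ) hs₀ hlb' h
    exact not_ae_le_of_tendsto_atTop (tendsto_rpow_div_self_sq_atTop hθ) hunb hmin C hC
  exact ⟨⟨hle, fun hθ => hres hθ 0 rfl⟩, fun h => hle (h 0 rfl), hres⟩

/-- **Abstract wave equation with fractional damping `f(s) = s^θ`.** In the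
multiplication-operator model of the spectral theorem, let `A` (multiplication
by `a`) be unbounded (`σ(A)` unbounded above) and strictly positive selfadjoint,
and consider `𝒜_θ(u,v) = (v, -Au - A^θ v)`.  Then `𝒜_θ` is bijective with
bounded inverse (i.e. `0 ∈ ρ(𝒜_θ)`) iff `θ ≤ 1`, and
`σ(𝒜_θ) ∩ iℝ = ∅` iff `θ ≤ 1`; by Batty's criterion the latter is equivalent
to the semiuniform stability of the associated contraction semigroup. -/
theorem fractional_damping_semiuniform
    (μ : Measure Ω) [SigmaFinite μ] (a : Ω → ℝ) (ha : Measurable a)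
    (σS : Set ℝ) (hcl : IsClosed σS) (hne : σS.Nonempty)
    (s₀ : ℝ) (hs₀ : 0 < s₀) (hlb : ∀ s ∈ σS, s₀ ≤ s)
    (hunb : ¬ BddAbove σS)
    (hmem : ∀ᵐ ω ∂μ, a ω ∈ σS)
    (hmin : ∀ s ∈ σS, ∀ ε > 0, μ {ω | |a ω - s| < ε} ≠ 0)
    (θ : ℝ) :
    (resSet μ a (fun s => s ^ θ) 0 ↔ θ ≤ 1) ∧
      ((∀ ξ : ℂ, ξ.re = 0 → resSet μ a (fun s => s ^ θ) ξ) ↔ θ ≤ 1) :=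
  fractional_damping_semiuniform_general μ a ha σS s₀ hs₀ hlb hunb hmem hmin θ
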